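/- arXiv:2202.09165 — 3 statements merged into one kernel-verified Lean document; each statement's English description precedes it below -/
import Mathlib

section
/- Let Γ_ℓ ≤ O(d) be a group of orthogonal maps with ⋂_{γ ∈ Γ_ℓ} ker(I − γ) = {0}, and let x_1,…,x_d be a basis of ℝ^d. Then there exist indices n_1,…,n_d ∈ {1,…,d} and elements μ_1,…,μ_d ∈ Γ_ℓ such that ⋂_{i=1}^d {x ∈ ℝ^d : ((I − μ_i^{-1})x_{n_i}) · x = 0} = {0}. -/
/-!
Since each `γ` is orthogonal, `⟪x - γ⁻¹ x, v⟫ = ⟪x, v - γ v⟫`. Hence a vector orthogonal to every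
`b j - γ⁻¹ (b j)` is fixed by all of `Γ`, so it is `0`: these vectors span the space, and any
spanning family contains a basis, i.e. `d` of them.
-/

open Module Submodule Set

theorem iInter_setOf_inner_eq_zero_of_span_eq_top {𝕜 E ι : Type*} [RCLike 𝕜]
    [NormedAddCommGroup E] [InnerProductSpace 𝕜 E] {y : ι → E}
    (hy : span 𝕜 (range y) = ⊤) : ⋂ i, {v : E | inner 𝕜 (y i) v = 0} = {0} := by
  refine subset_antisymm (fun v hv => ?_) (by simp)
  have hortho : span 𝕜 (range y) ⟂ span 𝕜 {v} := by
    rw [isOrtho_span]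
    rintro _ ⟨i, rfl⟩ _ rfl
    exact mem_iInter.mp hv i
  rwa [hy, isOrtho_top_left, span_singleton_eq_bot] at hortho

theorem LinearIsometryEquiv.inner_sub_inv_apply_left {𝕜 E : Type*} [RCLike 𝕜]
    [NormedAddCommGroup E] [InnerProductSpace 𝕜 E] (γ : E ≃ₗᵢ[𝕜] E) (x v : E) :
    inner 𝕜 (x - γ⁻¹ x) v = inner 𝕜 x (v - γ v) := by
  rw [inner_sub_left, inner_sub_right, coe_inv, inner_map_eq_flip, symm_symm]

theorem span_range_sub_inv_apply_eq_top {𝕜 E ι : Type*} [RCLike 𝕜]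
    [NormedAddCommGroup E] [InnerProductSpace 𝕜 E] [FiniteDimensional 𝕜 E]
    (Γ : Subgroup (E ≃ₗᵢ[𝕜] E)) {x : ι → E} (hx : span 𝕜 (range x) = ⊤)
    (hΓ : ⋂ γ ∈ Γ, {v : E | γ v = v} = {0}) :
    span 𝕜 (range fun p : ι × Γ => x p.1 - (p.2⁻¹ : Γ).1 (x p.1)) = ⊤ := by
  rw [← orthogonal_eq_bot_iff, eq_bot_iff]
  intro v hv
  suffices v ∈ ⋂ γ ∈ Γ, {v : E | γ v = v} by simpa [hΓ] using this
  refine mem_iInter₂.mpr fun γ hγ => ?_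
  have hperp : v - γ v ∈ ⋂ j, {w : E | inner 𝕜 (x j) w = 0} := mem_iInter.mpr fun j => by
    rw [mem_ofPred_eq, ← LinearIsometryEquiv.inner_sub_inv_apply_left]
    refine inner_right_of_mem_orthogonal ?_ hv
    exact subset_span ⟨(j, ⟨γ, hγ⟩), rfl⟩
  rw [iInter_setOf_inner_eq_zero_of_span_eq_top hx, mem_singleton_iff, sub_eq_zero] at hperp
  exact hperp.symm

theorem exists_fin_finrank_span_range_comp_eq_top {K V α : Type*} [DivisionRing K]
    [AddCommGroup V] [Module K V] [FiniteDimensional K V] {f : α → V}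
    (hf : span K (range f) = ⊤) : ∃ g : Fin (finrank K V) → α, span K (range (f ∘ g)) = ⊤ := by
  let B₀ := Basis.ofSpan hf.ge
  let B := B₀.reindex (B₀.indexEquiv (finBasis K V))
  have hB : ∀ i, ∃ a, f a = B i := fun i => Basis.ofSpan_subset hf.ge (by simp [B, B₀])
  choose g hg using hB
  exact ⟨g, by rw [show f ∘ g = B from funext hg, B.span_eq]⟩

/-- Let `Γ_ℓ` be a group of orthogonal maps of `ℝ^d` whose common fixed subspace
`⋂_{γ ∈ Γ_ℓ} ker (I - γ)` is `{0}`, and let `x_1, …, x_d` be a basis.  Then one can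
choose indices `n_1, …, n_d` and elements `μ_1, …, μ_d ∈ Γ_ℓ` so that the hyperplane
conditions `((I - μ_i⁻¹) x_{n_i}) ⬝ v = 0` for `i = 1, …, d` have only the trivial
common solution. -/
theorem exists_isometries_trivial_intersection {d : ℕ}
    (Γ : Subgroup (EuclideanSpace ℝ (Fin d) ≃ₗᵢ[ℝ] EuclideanSpace ℝ (Fin d)))
    (b : Module.Basis (Fin d) ℝ (EuclideanSpace ℝ (Fin d)))
    (hΓ : (⋂ γ ∈ Γ, {v : EuclideanSpace ℝ (Fin d) | γ v = v}) = {0}) :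
    ∃ (n : Fin d → Fin d) (μ : Fin d → Γ),
      (⋂ i : Fin d, {v : EuclideanSpace ℝ (Fin d) |
          inner ℝ (b (n i) - ((μ i)⁻¹ : Γ).1 (b (n i))) v = (0 : ℝ)}) = {0} := by
  have hchoice := exists_fin_finrank_span_range_comp_eq_top
    (span_range_sub_inv_apply_eq_top Γ b.span_eq hΓ)
  rw [finrank_euclideanSpace_fin] at hchoice
  obtain ⟨g, hg⟩ := hchoice
  exact ⟨fun i => (g i).1, fun i => (g i).2, iInter_setOf_inner_eq_zero_of_span_eq_top hg⟩
end

section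
/- In ℝ^3 the two rotations ρ_1 = (1/5)[[3,4,0],[-4,3,0],[0,0,5]] and ρ_2 = (1/5)[[5,0,0],[0,3,4],[0,-4,3]] generate a subgroup of SO(3) that is dense in SO(3). -/
/-!
Every rotation has Euler angles: it is `R_z(α) R_x(β) R_z(γ)`. The two generators are `R_z(θ)`
and `R_x(θ)` with `cos θ = 3/5`, and `θ / 2π` is irrational by Niven's theorem. For a closed
subgroup `K` containing `R_z(θ)`, the `t` with `R_z(t) ∈ K` form a closed subgroup of `ℝ`
containing `θ` and `2π`; it is dense, hence all of `ℝ`. So the closure of the generated group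
contains every `R_z(t)` and `R_x(t)`, hence all of `SO(3)`.
-/

open Matrix Real

theorem irrational_div_two_pi_of_cos_eq {θ : ℝ} {q : ℚ} (hθ : cos θ = q)
    (hq : (q : ℝ) ∉ ({-1, -1 / 2, 0, 1 / 2, 1} : Set ℝ)) : Irrational (θ / (2 * π)) := by
  rintro ⟨r, hr⟩
  have hθr : θ = (2 * r : ℚ) * π := by push_cast; rw [hr]; field_simp
  exact hq (hθ ▸ niven ⟨_, hθr⟩ ⟨q, hθ⟩)

theorem AddSubgroup.eq_top_of_isClosed_of_irrational {T : AddSubgroup ℝ}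
    (hT : IsClosed (T : Set ℝ)) {a b : ℝ} (ha : a ∈ T) (hb : b ∈ T) (hab : Irrational (a / b)) :
    T = ⊤ := by
  have hdense : Dense (T : Set ℝ) := (dense_addSubgroupClosure_pair_iff.2 hab).mono
    ((AddSubgroup.closure_le T).2 (Set.pair_subset ha hb))
  exact SetLike.coe_injective (by simpa [hT.closure_eq] using hdense.closure_eq)

theorem Subgroup.apply_mem_of_isClosed_of_irrational {G : Type*} [Group G] [TopologicalSpace G]
    {K : Subgroup G} (hK : IsClosed (K : Set G)) {φ : ℝ → G} (hφ : Continuous φ)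
    (map_add : ∀ s t, φ (s + t) = φ s * φ t) {a b : ℝ} (ha : φ a ∈ K) (hb : φ b ∈ K)
    (hab : Irrational (a / b)) (t : ℝ) : φ t ∈ K := by
  have map_zero : φ 0 = 1 := by simpa using map_add 0 0
  have map_neg (s : ℝ) : φ (-s) = (φ s)⁻¹ :=
    eq_inv_of_mul_eq_one_left (by rw [← map_add, neg_add_cancel, map_zero])
  let T : AddSubgroup ℝ :=
    { carrier := φ ⁻¹' K
      add_mem' := fun {s u} hs hu => by simpa [map_add] using K.mul_mem hs hu
      zero_mem' := by simp [map_zero]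
      neg_mem' := fun {s} hs => by simpa [map_neg] using K.inv_mem hs }
  have hT : T = ⊤ := AddSubgroup.eq_top_of_isClosed_of_irrational (hK.preimage hφ) ha hb hab
  show t ∈ T
  rw [hT]
  exact AddSubgroup.mem_top t

theorem exists_sqrt_mul_cos_eq_and_sin_eq (a b : ℝ) :
    ∃ t, √(a ^ 2 + b ^ 2) * cos t = a ∧ √(a ^ 2 + b ^ 2) * sin t = b :=
  ⟨Complex.arg (a + b * Complex.I),
    by simpa [Complex.norm_add_mul_I] using Complex.norm_mul_cos_arg (a + b * Complex.I),
    by simpa [Complex.norm_add_mul_I] using Complex.norm_mul_sin_arg (a + b * Complex.I)⟩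

theorem Matrix.transpose_mem_specialOrthogonalGroup {n : Type*} [Fintype n] [DecidableEq n]
    {A : Matrix n n ℝ} (hA : A ∈ specialOrthogonalGroup n ℝ) :
    Aᵀ ∈ specialOrthogonalGroup n ℝ := by
  rw [mem_specialOrthogonalGroup_iff, det_transpose] at *
  exact ⟨transpose_mem_unitaryGroup_iff.2 hA.1, hA.2⟩

namespace SO3

noncomputable def rotZ (t : ℝ) : orthogonalGroup (Fin 3) ℝ :=
  ⟨!![cos t, sin t, 0; -sin t, cos t, 0; 0, 0, 1], (mem_orthogonalGroup_iff _ _).2 <| by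
    ext i j
    fin_cases i <;> fin_cases j <;> simp [mul_apply, Fin.sum_univ_three, one_apply] <;>
      linarith [sin_sq_add_cos_sq t]⟩

noncomputable def rotX (t : ℝ) : orthogonalGroup (Fin 3) ℝ :=
  ⟨!![1, 0, 0; 0, cos t, sin t; 0, -sin t, cos t], (mem_orthogonalGroup_iff _ _).2 <| by
    ext i j
    fin_cases i <;> fin_cases j <;> simp [mul_apply, Fin.sum_univ_three, one_apply] <;>
      linarith [sin_sq_add_cos_sq t]⟩

@[simp]
theorem coe_rotZ (t : ℝ) :
    (rotZ t : Matrix (Fin 3) (Fin 3) ℝ) = !![cos t, sin t, 0; -sin t, cos t, 0; 0, 0, 1] :=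
  rfl

@[simp]
theorem coe_rotX (t : ℝ) :
    (rotX t : Matrix (Fin 3) (Fin 3) ℝ) = !![1, 0, 0; 0, cos t, sin t; 0, -sin t, cos t] :=
  rfl

theorem rotZ_add (s t : ℝ) : rotZ (s + t) = rotZ s * rotZ t := by
  ext i j
  fin_cases i <;> fin_cases j <;> simp [mul_apply, Fin.sum_univ_three, cos_add, sin_add] <;> ring

theorem rotX_add (s t : ℝ) : rotX (s + t) = rotX s * rotX t := by
  ext i j
  fin_cases i <;> fin_cases j <;> simp [mul_apply, Fin.sum_univ_three, cos_add, sin_add] <;> ring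

theorem rotZ_two_pi : rotZ (2 * π) = 1 := by
  ext i j
  fin_cases i <;> fin_cases j <;> simp [one_apply]

theorem rotX_two_pi : rotX (2 * π) = 1 := by
  ext i j
  fin_cases i <;> fin_cases j <;> simp [one_apply]

theorem continuous_rotZ : Continuous rotZ := by
  refine continuous_induced_rng.2 <| continuous_matrix fun i j => ?_
  fin_cases i <;> fin_cases j <;> simp <;> fun_prop

theorem continuous_rotX : Continuous rotX := by
  refine continuous_induced_rng.2 <| continuous_matrix fun i j => ?_
  fin_cases i <;> fin_cases j <;> simp <;> fun_prop

theorem det_rotZ (t : ℝ) : (rotZ t : Matrix (Fin 3) (Fin 3) ℝ).det = 1 := by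
  simp [det_fin_three]
  linarith [sin_sq_add_cos_sq t]

theorem det_rotX (t : ℝ) : (rotX t : Matrix (Fin 3) (Fin 3) ℝ).det = 1 := by
  simp [det_fin_three]
  linarith [sin_sq_add_cos_sq t]

theorem exists_rotZ_mul_rotX_mulVec_single_eq (v : Fin 3 → ℝ)
    (hv : v 0 ^ 2 + v 1 ^ 2 + v 2 ^ 2 = 1) :
    ∃ α β, (↑(rotZ α * rotX β) : Matrix (Fin 3) (Fin 3) ℝ) *ᵥ Pi.single 2 1 = v := by
  obtain ⟨α, hcos, hsin⟩ := exists_sqrt_mul_cos_eq_and_sin_eq (v 1) (v 0)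
  have hcosβ : cos (arccos (v 2)) = v 2 := cos_arccos (by nlinarith) (by nlinarith)
  have hsinβ : sin (arccos (v 2)) = √(v 1 ^ 2 + v 0 ^ 2) := by
    rw [sin_arccos]
    congr 1
    linarith
  refine ⟨α, arccos (v 2), ?_⟩
  ext i
  fin_cases i <;> simp [hcosβ, hsinβ] <;> linarith

theorem exists_eq_rotZ_of_mulVec_single_eq {C : Matrix (Fin 3) (Fin 3) ℝ}
    (hC : C ∈ specialOrthogonalGroup (Fin 3) ℝ) (hfix : C *ᵥ Pi.single 2 1 = Pi.single 2 1) :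
    ∃ γ, C = rotZ γ := by
  obtain ⟨hO, hdet⟩ := mem_specialOrthogonalGroup_iff.1 hC
  have h02 : C 0 2 = 0 := by simpa using congrFun hfix 0
  have h12 : C 1 2 = 0 := by simpa using congrFun hfix 1
  have h22 : C 2 2 = 1 := by simpa using congrFun hfix 2
  have hrow (i j : Fin 3) :
      C i 0 * C j 0 + C i 1 * C j 1 + C i 2 * C j 2 = (1 : Matrix (Fin 3) (Fin 3) ℝ) i j := by
    simpa [mul_apply, Fin.sum_univ_three] using
      congrFun (congrFun ((mem_orthogonalGroup_iff _ _).1 hO) i) j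
  have h00 : C 0 0 ^ 2 + C 0 1 ^ 2 = 1 := by simpa [h02, sq] using hrow 0 0
  have h01 : C 0 0 * C 1 0 + C 0 1 * C 1 1 = 0 := by simpa [h02, h12] using hrow 0 1
  have h2 : C 2 0 ^ 2 + C 2 1 ^ 2 = 0 := by simpa [h22, sq] using hrow 2 2
  have h20 : C 2 0 = 0 := by nlinarith
  have h21 : C 2 1 = 0 := by nlinarith
  have hdet' : C 0 0 * C 1 1 - C 0 1 * C 1 0 = 1 := by
    simpa [det_fin_three, h02, h12, h20, h21, h22] using hdet
  have h10 : C 1 0 = -C 0 1 := by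
    linear_combination C 0 0 * h01 - C 0 1 * hdet' - C 1 0 * h00
  have h11 : C 1 1 = C 0 0 := by
    linear_combination C 0 1 * h01 + C 0 0 * hdet' - C 1 1 * h00
  obtain ⟨γ, hcos, hsin⟩ := exists_sqrt_mul_cos_eq_and_sin_eq (C 0 0) (C 0 1)
  rw [h00, sqrt_one, one_mul] at hcos hsin
  refine ⟨γ, ?_⟩
  ext i j
  fin_cases i <;> fin_cases j <;> simp [hcos, hsin, h02, h12, h22, h20, h21, h10, h11]

theorem exists_eq_rotZ_mul_rotX_mul_rotZ {A : Matrix (Fin 3) (Fin 3) ℝ}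
    (hA : A ∈ specialOrthogonalGroup (Fin 3) ℝ) :
    ∃ α β γ, A = ↑(rotZ α * rotX β * rotZ γ) := by
  have hAtA := (mem_orthogonalGroup_iff' _ _).1 (mem_specialOrthogonalGroup_iff.1 hA).1
  have hunit : (A *ᵥ Pi.single 2 1) 0 ^ 2 + (A *ᵥ Pi.single 2 1) 1 ^ 2 +
      (A *ᵥ Pi.single 2 1) 2 ^ 2 = 1 := by
    simpa [mulVec_single_one, mul_apply, Fin.sum_univ_three, sq] using
      congrFun (congrFun hAtA 2) 2
  obtain ⟨α, β, hM⟩ := exists_rotZ_mul_rotX_mulVec_single_eq _ hunit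
  set M := rotZ α * rotX β
  have hMSO : (M : Matrix (Fin 3) (Fin 3) ℝ) ∈ specialOrthogonalGroup (Fin 3) ℝ :=
    mem_specialOrthogonalGroup_iff.2
      ⟨M.prop, by rw [UnitaryGroup.mul_val, det_mul, det_rotZ, det_rotX, mul_one]⟩
  -- `M` carries the z-axis to the third column of `A`, so `Mᵀ A` is a rotation about the z-axis.
  obtain ⟨γ, hγ⟩ := exists_eq_rotZ_of_mulVec_single_eq
    (mul_mem (transpose_mem_specialOrthogonalGroup hMSO) hA)
    (by rw [← mulVec_mulVec, ← hM, mulVec_mulVec, (mem_orthogonalGroup_iff' _ _).1 M.prop,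
      one_mulVec])
  refine ⟨α, β, γ, ?_⟩
  rw [UnitaryGroup.mul_val, ← hγ, ← mul_assoc, (mem_orthogonalGroup_iff _ _).1 M.prop, one_mul]

end SO3

open SO3 in
/-- The rotations `ρ_1 = (1/5)[[3,4,0],[-4,3,0],[0,0,5]]` and
`ρ_2 = (1/5)[[5,0,0],[0,3,4],[0,-4,3]]` generate a dense subgroup of `SO(3)`:
every special orthogonal `3×3` matrix lies in the topological closure of the subgroup of
the orthogonal group generated by `ρ_1` and `ρ_2` (whose elements all have determinant
`1`, so this closure is contained in `SO(3)`). -/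
theorem rho1_rho2_generate_dense_subgroup_of_SO3
    (ρ1 ρ2 : Matrix.orthogonalGroup (Fin 3) ℝ)
    (h1 : (ρ1 : Matrix (Fin 3) (Fin 3) ℝ) =
      (1/5 : ℝ) • !![(3 : ℝ), 4, 0; -4, 3, 0; 0, 0, 5])
    (h2 : (ρ2 : Matrix (Fin 3) (Fin 3) ℝ) =
      (1/5 : ℝ) • !![(5 : ℝ), 0, 0; 0, 3, 4; 0, -4, 3]) :
    ∀ A : Matrix (Fin 3) (Fin 3) ℝ, A ∈ Matrix.specialOrthogonalGroup (Fin 3) ℝ →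
      A ∈ closure ((fun g : Matrix.orthogonalGroup (Fin 3) ℝ =>
        (g : Matrix (Fin 3) (Fin 3) ℝ)) '' (Subgroup.closure {ρ1, ρ2})) := by
  intro A hA
  obtain ⟨α, β, γ, rfl⟩ := exists_eq_rotZ_mul_rotX_mul_rotZ hA
  set θ := arccos (3 / 5)
  have hcos : cos θ = 3 / 5 := cos_arccos (by norm_num) (by norm_num)
  have hsin : sin θ = 4 / 5 := by
    rw [sin_arccos, show (1 : ℝ) - (3 / 5) ^ 2 = (4 / 5) ^ 2 by norm_num, sqrt_sq (by norm_num)]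
  have hirr : Irrational (θ / (2 * π)) :=
    irrational_div_two_pi_of_cos_eq (q := 3 / 5) (by rw [hcos]; norm_num) (by norm_num)
  have hρ1 : ρ1 = rotZ θ := by
    rw [Subtype.ext_iff, coe_rotZ, h1]
    ext i j
    fin_cases i <;> fin_cases j <;> simp [hcos, hsin] <;> norm_num
  have hρ2 : ρ2 = rotX θ := by
    rw [Subtype.ext_iff, coe_rotX, h2]
    ext i j
    fin_cases i <;> fin_cases j <;> simp [hcos, hsin] <;> norm_num
  set K := (Subgroup.closure {ρ1, ρ2}).topologicalClosure
  have hK : IsClosed (K : Set (orthogonalGroup (Fin 3) ℝ)) := Subgroup.isClosed_topologicalClosure _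
  have hgen : ∀ g ∈ ({ρ1, ρ2} : Set (orthogonalGroup (Fin 3) ℝ)), g ∈ K :=
    fun g hg => Subgroup.le_topologicalClosure _ (Subgroup.subset_closure hg)
  have hZ (t : ℝ) : rotZ t ∈ K := Subgroup.apply_mem_of_isClosed_of_irrational hK continuous_rotZ
    rotZ_add (hρ1 ▸ hgen ρ1 (by simp)) (rotZ_two_pi ▸ K.one_mem) hirr t
  have hX (t : ℝ) : rotX t ∈ K := Subgroup.apply_mem_of_isClosed_of_irrational hK continuous_rotX
    rotX_add (hρ2 ▸ hgen ρ2 (by simp)) (rotX_two_pi ▸ K.one_mem) hirr t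
  exact image_closure_subset_closure_image continuous_subtype_val
    ⟨_, K.mul_mem (K.mul_mem (hZ α) (hX β)) (hZ γ), rfl⟩
end

section
/- Let Γ ≤ O(2) and let (G,φ) be a Γ-gain graph such that the Γ-gain graph (G',φ') obtained by a gained 0-extension (adding vertex v0 and two gained edges to existing vertices) satisfies: if (G,φ) is Γ-symmetrically rigid in ℝ^2 then so is (G',φ'). Then for any multigraph 0-extension G' of G (even when the two new edges are parallel), provided |Γ| ≥ 2, there exists an extension φ' of φ to G' making (G',φ') Γ-symmetrically rigid; in particular one can take both new edge gains trivial when the new edges are not parallel, and gains 1 and γ (γ ≠ 1) when they are parallel. -/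
open Matrix

/-- The orthogonal matrix underlying an element of a point group `Γ ≤ O(d)`. -/
noncomputable def gmat {d : ℕ} {Γ : Subgroup (Matrix.orthogonalGroup (Fin d) ℝ)}
    (γ : Γ) : Matrix (Fin d) (Fin d) ℝ :=
  ((γ : Matrix.orthogonalGroup (Fin d) ℝ) : Matrix (Fin d) (Fin d) ℝ)

/-- `gain` is a valid `Γ`-gain map on the multigraph with oriented edges `src e → tgt e`:
loops carry nontrivial gains, and parallel edges (in either relative orientation) carry
distinct gains. -/
def IsGainMap {d : ℕ} {Γ : Subgroup (Matrix.orthogonalGroup (Fin d) ℝ)} {V E : Type}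
    (src tgt : E → V) (gain : E → Γ) : Prop :=
  (∀ e, src e = tgt e → gain e ≠ 1) ∧
  (∀ e e', e ≠ e' → src e = src e' → tgt e = tgt e' → gain e ≠ gain e') ∧
  (∀ e e', e ≠ e' → src e = tgt e' → tgt e = src e' → gain e ≠ (gain e')⁻¹)

/-- `u` is a `Γ`-symmetric infinitesimal flex of the orbit framework `(G, φ, p)`:
it lies in the kernel of the orbit rigidity matrix.  (The uniform formula below
specialises to the loop row `⟨2p(v) - γ p(v) - γ⁻¹ p(v), u(v)⟩ = 0` when
`src e = tgt e`.) -/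
def IsSymFlex {d : ℕ} {Γ : Subgroup (Matrix.orthogonalGroup (Fin d) ℝ)} {V E : Type}
    (src tgt : E → V) (gain : E → Γ) (p u : V → (Fin d → ℝ)) : Prop :=
  ∀ e : E,
    (p (src e) - (gmat (gain e)).mulVec (p (tgt e))) ⬝ᵥ u (src e) +
      (p (tgt e) - (gmat (gain e)⁻¹).mulVec (p (src e))) ⬝ᵥ u (tgt e) = 0

/-- A `Γ`-symmetric flex is trivial if it extends to a trivial flex `x ↦ Tx + c`
(`T` skew-symmetric) of the whole `Γ`-symmetric covering framework. -/
def IsTrivialFlex {d : ℕ} (Γ : Subgroup (Matrix.orthogonalGroup (Fin d) ℝ)) {V : Type}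
    (p u : V → (Fin d → ℝ)) : Prop :=
  ∃ (T : Matrix (Fin d) (Fin d) ℝ) (x : Fin d → ℝ),
    Tᵀ = -T ∧ (∀ v, u v = T.mulVec (p v) + x) ∧
    (∀ v, ∀ γ : Γ, (gmat γ).mulVec (u v) = T.mulVec ((gmat γ).mulVec (p v)) + x)

/-- A gain graph is `Γ`-symmetrically rigid if it admits an orbit placement for which
every `Γ`-symmetric flex is trivial. -/
def SymRigid {d : ℕ} (Γ : Subgroup (Matrix.orthogonalGroup (Fin d) ℝ)) {V E : Type}
    (src tgt : E → V) (gain : E → Γ) : Prop :=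
  ∃ p : V → (Fin d → ℝ),
    ∀ u : V → (Fin d → ℝ), IsSymFlex src tgt gain p u → IsTrivialFlex Γ p u

-- Both new edges leave the new vertex `none`, so they are neither loops nor reversed parallels
-- of any edge; only a pair of parallel new edges constrains their gains.
theorem IsGainMap.zeroExtension {d : ℕ} {Γ : Subgroup (Matrix.orthogonalGroup (Fin d) ℝ)}
    {V E : Type} {src tgt : E → V} {gain : E → Γ} (hgain : IsGainMap src tgt gain)
    (v1 v2 : V) (g : Fin 2 → Γ) (hg : v1 = v2 → g 0 ≠ g 1) :
    IsGainMap (Sum.elim (fun e => some (src e)) (fun _ => (none : Option V)))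
      (Sum.elim (fun e => some (tgt e)) (fun i => if i = 0 then some v1 else some v2))
      (Sum.elim gain g) := by
  obtain ⟨hloop, hpar, hanti⟩ := hgain
  refine ⟨?_, ?_, ?_⟩
  · rintro (e | i) he
    · exact hloop e (Option.some_injective _ he)
    · simp only [Sum.elim_inr] at he
      split at he <;> exact (Option.some_ne_none _ he.symm).elim
  · rintro (e | i) (e' | j) hne hs ht
    · exact hpar e e' (by simpa using hne) (Option.some_injective _ hs)
        (Option.some_injective _ ht)
    · simp at hs
    · simp at hs
    · have hij : i ≠ j := by simpa using hne
      fin_cases i <;> fin_cases j <;> simp_all [eq_comm]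
  · rintro (e | i) (e' | j) hne hs ht
    · exact hanti e e' (by simpa using hne) (Option.some_injective _ hs)
        (Option.some_injective _ ht)
    · simp at ht
    · simp at hs
    · simp only [Sum.elim_inr] at hs
      split at hs <;> exact (Option.some_ne_none _ hs.symm).elim

theorem gained_zero_extension_exists_rigid_gains_general
    (Γ : Subgroup (Matrix.orthogonalGroup (Fin 2) ℝ))
    (hΓ : 2 ≤ Nat.card Γ)
    {V E : Type}
    (src tgt : E → V) (gain : E → Γ)
    (hgain : IsGainMap src tgt gain)
    (v1 v2 : V)
    (hlemma : ∀ gain' : (E ⊕ Fin 2) → Γ,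
      IsGainMap (Sum.elim (fun e => some (src e)) (fun _ => (none : Option V)))
        (Sum.elim (fun e => some (tgt e)) (fun i => if i = 0 then some v1 else some v2))
        gain' →
      (∀ e : E, gain' (Sum.inl e) = gain e) →
      SymRigid Γ src tgt gain →
      SymRigid Γ
        (Sum.elim (fun e => some (src e)) (fun _ => (none : Option V)))
        (Sum.elim (fun e => some (tgt e)) (fun i => if i = 0 then some v1 else some v2))
        gain')
    (hrigid : SymRigid Γ src tgt gain) :
    ∃ gain' : (E ⊕ Fin 2) → Γ,
      IsGainMap (Sum.elim (fun e => some (src e)) (fun _ => (none : Option V)))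
        (Sum.elim (fun e => some (tgt e)) (fun i => if i = 0 then some v1 else some v2))
        gain' ∧
      (∀ e : E, gain' (Sum.inl e) = gain e) ∧
      SymRigid Γ
        (Sum.elim (fun e => some (src e)) (fun _ => (none : Option V)))
        (Sum.elim (fun e => some (tgt e)) (fun i => if i = 0 then some v1 else some v2))
        gain' ∧
      (v1 ≠ v2 → gain' (Sum.inr 0) = 1 ∧ gain' (Sum.inr 1) = 1) ∧
      (v1 = v2 → gain' (Sum.inr 0) = 1 ∧ gain' (Sum.inr 1) ≠ 1) := by
  classical
  have : Finite Γ := Nat.finite_of_card_ne_zero (by omega)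
  have : Nontrivial Γ := Finite.one_lt_card_iff_nontrivial.mp hΓ
  obtain ⟨γ, hγ⟩ := exists_ne (1 : Γ)
  let g : Fin 2 → Γ := ![1, if v1 = v2 then γ else 1]
  have hmap := hgain.zeroExtension v1 v2 g fun hv => by simpa [g, hv] using hγ.symm
  refine ⟨Sum.elim gain g, hmap, fun _ => rfl, hlemma _ hmap (fun _ => rfl) hrigid, ?_, ?_⟩
  · intro hv; simp [g, hv]
  · intro hv; simp [g, hv, hγ]

/-- Suppose `Γ ≤ O(2)` with `|Γ| ≥ 2`, and `(G, φ)` (given by `src`, `tgt`, `gain`) is a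
`Γ`-symmetrically rigid gain graph such that every gained 0-extension of `(G, φ)`
preserves `Γ`-symmetric rigidity in `ℝ²` (the hypothesis `hlemma`).  Then for any
multigraph 0-extension `G'` of `G` (new vertex `none`, two new edges to the old
vertices `v1, v2`, possibly parallel), there exists an extension `gain'` of `gain`
making `(G', φ')` a `Γ`-symmetrically rigid gain graph; moreover one can take both new
gains trivial when `v1 ≠ v2`, and gains `1` and `γ ≠ 1` when `v1 = v2`. -/
theorem gained_zero_extension_exists_rigid_gains
    (Γ : Subgroup (Matrix.orthogonalGroup (Fin 2) ℝ))
    (hΓ : 2 ≤ Nat.card Γ)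
    {V E : Type} [Fintype V] [Fintype E]
    (src tgt : E → V) (gain : E → Γ)
    (hgain : IsGainMap src tgt gain)
    (v1 v2 : V)
    (hlemma : ∀ gain' : (E ⊕ Fin 2) → Γ,
      IsGainMap (Sum.elim (fun e => some (src e)) (fun _ => (none : Option V)))
        (Sum.elim (fun e => some (tgt e)) (fun i => if i = 0 then some v1 else some v2))
        gain' →
      (∀ e : E, gain' (Sum.inl e) = gain e) →
      SymRigid Γ src tgt gain →
      SymRigid Γ
        (Sum.elim (fun e => some (src e)) (fun _ => (none : Option V)))
        (Sum.elim (fun e => some (tgt e)) (fun i => if i = 0 then some v1 else some v2))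
        gain')
    (hrigid : SymRigid Γ src tgt gain) :
    ∃ gain' : (E ⊕ Fin 2) → Γ,
      IsGainMap (Sum.elim (fun e => some (src e)) (fun _ => (none : Option V)))
        (Sum.elim (fun e => some (tgt e)) (fun i => if i = 0 then some v1 else some v2))
        gain' ∧
      (∀ e : E, gain' (Sum.inl e) = gain e) ∧
      SymRigid Γ
        (Sum.elim (fun e => some (src e)) (fun _ => (none : Option V)))
        (Sum.elim (fun e => some (tgt e)) (fun i => if i = 0 then some v1 else some v2))
        gain' ∧
      (v1 ≠ v2 → gain' (Sum.inr 0) = 1 ∧ gain' (Sum.inr 1) = 1) ∧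
      (v1 = v2 → gain' (Sum.inr 0) = 1 ∧ gain' (Sum.inr 1) ≠ 1) :=
  gained_zero_extension_exists_rigid_gains_general Γ hΓ src tgt gain hgain v1 v2 hlemma hrigid
end
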